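/- arXiv:1902.04335 — 4 statements merged into one kernel-verified Lean document; each statement's English description precedes it below -/
import Mathlib

section
/- Let n ≥ 1, a ∈ ℝ, P = I − (1/n)𝟙𝟙ᵀ, W = {P e_1, …, P e_n}, and define φ_ord : ℝ₊^n → ℝ^n × ℝ by φ_ord(x) = (P x, a − (1/n) Σ_k x_k). Then φ_ord is injective, and for all x, y ∈ ℝ₊^n the reversed product order relation x ⪰_ord y (meaning x_k ≤ y_k for all k = 1, …, n) holds if and only if d_W(P x, P y) ≤ r_x − r_y, where r_x = a − (1/n) Σ_k x_k and r_y = a − (1/n) Σ_k y_k. That is, Order Embeddings are order isomorphic to Disk Embeddings with quasi-metric d_W via φ_ord. -/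
/-!
Every `P x` has coordinate sum zero and `P` is self-adjoint, so `⟪P e_k, P x - P y⟫` is just
`(P x)_k - (P y)_k = (x_k - y_k) - (mean x - mean y)`, while `r_x - r_y = mean y - mean x`.
Hence `d_W(P x, P y) ≤ r_x - r_y` says `x_k ≤ y_k` for every `k`. Injectivity of `φ_ord` holds
because `x` is recovered as `P x + mean x • 𝟙`.
-/

open RealInnerProductSpace

namespace EuclideanSpace

variable {ι : Type*} [Fintype ι]

noncomputable def mean (v : EuclideanSpace ℝ ι) : ℝ := (∑ k, v k) / Fintype.card ι

noncomputable def centering (v : EuclideanSpace ℝ ι) : EuclideanSpace ℝ ι :=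
  WithLp.toLp 2 fun i => v i - mean v

@[simp]
theorem centering_apply (v : EuclideanSpace ℝ ι) (i : ι) : centering v i = v i - mean v := rfl

theorem sum_centering (v : EuclideanSpace ℝ ι) : ∑ i, centering v i = 0 := by
  rcases isEmpty_or_nonempty ι with hι | hι
  · exact Finset.sum_of_isEmpty _
  · have hcard : (Fintype.card ι : ℝ) ≠ 0 := Nat.cast_ne_zero.mpr Fintype.card_ne_zero
    simp [Finset.sum_sub_distrib, mean, mul_div_cancel₀, hcard]

theorem eq_of_centering_eq_of_mean_eq {x y : EuclideanSpace ℝ ι} (hc : centering x = centering y)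
    (hm : mean x = mean y) : x = y := by
  ext i
  simpa [hm] using congrArg (· i) hc

theorem inner_centering_of_sum_eq_zero (u w : EuclideanSpace ℝ ι) (hw : ∑ i, w i = 0) :
    ⟪centering u, w⟫ = ⟪u, w⟫ := by
  simp only [PiLp.inner_apply, centering_apply, RCLike.inner_apply, conj_trivial, mul_sub,
    Finset.sum_sub_distrib, ← Finset.sum_mul, hw, zero_mul, sub_zero]

variable [DecidableEq ι]

theorem inner_centering_single_of_sum_eq_zero (k : ι) (w : EuclideanSpace ℝ ι)
    (hw : ∑ i, w i = 0) : ⟪centering (single k 1), w⟫ = w k := by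
  rw [inner_centering_of_sum_eq_zero _ _ hw, inner_single_left, map_one, one_mul]

theorem inner_centering_single_centering_sub (k : ι) (x y : EuclideanSpace ℝ ι) :
    ⟪centering (single k 1), centering x - centering y⟫ = centering x k - centering y k := by
  rw [inner_centering_single_of_sum_eq_zero]
  · rfl
  · simp only [PiLp.sub_apply, Finset.sum_sub_distrib, sum_centering, sub_zero]

theorem forall_le_iff_sup'_inner_centering_single_le (hne : (Finset.univ : Finset ι).Nonempty)
    (x y : EuclideanSpace ℝ ι) :
    (∀ k, x k ≤ y k) ↔
      Finset.univ.sup' hne (fun k => ⟪centering (single k 1), centering x - centering y⟫) ≤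
        mean y - mean x := by
  simp only [Finset.sup'_le_iff, Finset.mem_univ, true_implies,
    inner_centering_single_centering_sub, centering_apply]
  exact forall_congr' fun k => by constructor <;> intro h <;> linarith

end EuclideanSpace

/-- Order Embeddings are order isomorphic to Euclidean Disk Embeddings with the
polyhedral quasi-metric `d_W`, `W = {P e_1, …, P e_n}`, via the map
`φ_ord(x) = (P x, a − (1/n) Σ_k x_k)`: the map `φ_ord` is injective on `ℝ₊^n`, and
for `x, y ∈ ℝ₊^n` the reversed product order `x ⪰_ord y` (i.e. `x_k ≤ y_k` for all
`k`) holds iff `d_W(P x, P y) ≤ r_x − r_y`. -/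
theorem order_embeddings_iso_disk_embeddings {n : ℕ} (hn : 0 < n) (a : ℝ) :
    let P : EuclideanSpace ℝ (Fin n) → EuclideanSpace ℝ (Fin n) :=
      fun v => WithLp.toLp 2 (fun i => v i - (∑ k, v k) / n)
    let e : Fin n → EuclideanSpace ℝ (Fin n) := fun k => EuclideanSpace.single k 1
    let hne : (Finset.univ : Finset (Fin n)).Nonempty := ⟨⟨0, hn⟩, Finset.mem_univ _⟩
    let dW : EuclideanSpace ℝ (Fin n) → EuclideanSpace ℝ (Fin n) → ℝ :=
      fun u v => Finset.univ.sup' hne fun k => ⟪P (e k), u - v⟫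
    let φ : EuclideanSpace ℝ (Fin n) → EuclideanSpace ℝ (Fin n) × ℝ :=
      fun v => (P v, a - (∑ k, v k) / n)
    (∀ x y : EuclideanSpace ℝ (Fin n), (∀ i, 0 ≤ x i) → (∀ i, 0 ≤ y i) →
      φ x = φ y → x = y) ∧
    (∀ x y : EuclideanSpace ℝ (Fin n), (∀ i, 0 ≤ x i) → (∀ i, 0 ≤ y i) →
      ((∀ k, x k ≤ y k) ↔
        dW (P x) (P y) ≤ (a - (∑ k, x k) / n) - (a - (∑ k, y k) / n))) := by
  intro P e hne dW φ
  have hmean (v : EuclideanSpace ℝ (Fin n)) : (∑ k, v k) / n = EuclideanSpace.mean v := by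
    simp [EuclideanSpace.mean]
  have hP (v : EuclideanSpace ℝ (Fin n)) : P v = EuclideanSpace.centering v := by
    simp only [P, hmean]; rfl
  refine ⟨fun x y _ _ h => ?_, fun x y _ _ => ?_⟩
  · simp only [φ, Prod.mk.injEq, hP, hmean, sub_right_inj] at h
    exact EuclideanSpace.eq_of_centering_eq_of_mean_eq h.1 h.2
  · simp only [dW, e, hP, hmean, sub_sub_sub_cancel_left]
    exact EuclideanSpace.forall_le_iff_sup'_inner_centering_single_le hne x y
end

section
/- Let d > 0, set x = tanh(d/2), and let r ∈ ℝ be such that x cos r ≠ 1. Suppose real numbers s ≠ 0 and ψ satisfy (1 − s) sin r = s sin ψ and s² = x² + (1 − s)² − 2x(1 − s) cos r. Then sin ψ = sin r / (cosh d − sinh d · cos r). -/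
/-!
Eliminating `s` from the law of cosines gives `s (2 - 2x cos r) = 1 + x² - 2x cos r`, and then
the sine relation gives `sin ψ (1 + x² - 2x cos r) = sin r (1 - x²)`. Since `|x| < 1`, the factor
`1 + x² - 2x cos r ≥ (1 - |x|)²` is positive, and the half-angle formulas
`cosh d = (1 + x²)/(1 - x²)`, `sinh d = 2x/(1 - x²)` for `x = tanh (d/2)` turn
`(1 + x² - 2x cos r)/(1 - x²)` into `cosh d - sinh d cos r`.
-/

open Real

theorem cosh_two_mul_mul_one_sub_tanh_sq (y : ℝ) :
    cosh (2 * y) * (1 - tanh y ^ 2) = 1 + tanh y ^ 2 := by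
  have hc : cosh y ≠ 0 := (cosh_pos y).ne'
  rw [tanh_eq_sinh_div_cosh, cosh_two_mul]
  field_simp
  exact cosh_sq_sub_sinh_sq y

theorem sinh_two_mul_mul_one_sub_tanh_sq (y : ℝ) :
    sinh (2 * y) * (1 - tanh y ^ 2) = 2 * tanh y := by
  have hc : cosh y ≠ 0 := (cosh_pos y).ne'
  rw [tanh_eq_sinh_div_cosh, sinh_two_mul]
  field_simp
  linear_combination sinh y * cosh_sq_sub_sinh_sq y

theorem cosh_sub_sinh_mul_eq_tanh_half (y c : ℝ) :
    cosh y - sinh y * c =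
      (1 + tanh (y / 2) ^ 2 - 2 * tanh (y / 2) * c) / (1 - tanh (y / 2) ^ 2) := by
  rw [eq_div_iff (sub_ne_zero.mpr (tanh_sq_lt_one _).ne')]
  have hy : 2 * (y / 2) = y := mul_div_cancel₀ y two_ne_zero
  have hcosh := cosh_two_mul_mul_one_sub_tanh_sq (y / 2)
  have hsinh := sinh_two_mul_mul_one_sub_tanh_sq (y / 2)
  rw [hy] at hcosh hsinh
  linear_combination hcosh - c * hsinh

theorem one_add_sq_sub_two_mul_cos_pos {x : ℝ} (hx : |x| < 1) (r : ℝ) :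
    0 < 1 + x ^ 2 - 2 * x * cos r := by
  have hxc : x * cos r ≤ |x| := by
    calc x * cos r ≤ |x * cos r| := le_abs_self _
      _ ≤ |x| := by rw [abs_mul]; exact mul_le_of_le_one_right (abs_nonneg x) (abs_cos_le_one r)
  nlinarith [sq_abs x, mul_pos (sub_pos.mpr hx) (sub_pos.mpr hx)]

theorem sin_mul_eq_of_law_of_cosines {x r s ψ : ℝ} (h1 : (1 - s) * sin r = s * sin ψ)
    (h2 : s ^ 2 = x ^ 2 + (1 - s) ^ 2 - 2 * x * (1 - s) * cos r) :
    sin ψ * (1 + x ^ 2 - 2 * x * cos r) = sin r * (1 - x ^ 2) := by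
  linear_combination (2 * x * cos r - 2) * h1 - (sin r + sin ψ) * h2

theorem sin_psi_elimination_general (d : ℝ) (x : ℝ) (hx : x = Real.tanh (d / 2))
    (r : ℝ) (s ψ : ℝ)
    (h1 : (1 - s) * Real.sin r = s * Real.sin ψ)
    (h2 : s ^ 2 = x ^ 2 + (1 - s) ^ 2 - 2 * x * (1 - s) * Real.cos r) :
    Real.sin ψ = Real.sin r / (Real.cosh d - Real.sinh d * Real.cos r) := by
  have hpos := one_add_sq_sub_two_mul_cos_pos (hx ▸ abs_tanh_lt_one (d / 2)) r
  rw [cosh_sub_sinh_mul_eq_tanh_half, ← hx, div_div_eq_mul_div, eq_div_iff hpos.ne']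
  exact sin_mul_eq_of_law_of_cosines h1 h2

/-- From the Euclidean triangle construction in the Poincaré ball: if `d > 0`,
`x = tanh(d/2)`, `x cos r ≠ 1`, and real numbers `s ≠ 0` and `ψ` satisfy
`(1 − s) sin r = s sin ψ` and `s² = x² + (1 − s)² − 2x(1 − s) cos r`, then
`sin ψ = sin r / (cosh d − sinh d · cos r)`. -/
theorem sin_psi_elimination (d : ℝ) (hd : 0 < d) (x : ℝ) (hx : x = Real.tanh (d / 2))
    (r : ℝ) (hxr : x * Real.cos r ≠ 1) (s ψ : ℝ) (hs : s ≠ 0)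
    (h1 : (1 - s) * Real.sin r = s * Real.sin ψ)
    (h2 : s ^ 2 = x ^ 2 + (1 - s) ^ 2 - 2 * x * (1 - s) * Real.cos r) :
    Real.sin ψ = Real.sin r / (Real.cosh d - Real.sinh d * Real.cos r) :=
  sin_psi_elimination_general d x hx r s ψ h1 h2
end

section
/- Let n ≥ 1 and let y ∈ ℝ^n with ‖y‖ < 1. Define the translation τ_y(x) = ((1 − ‖y‖²) x + (1 + 2⟨x, y⟩ + ‖x‖²) y) / (1 + 2⟨x, y⟩ + ‖y‖²‖x‖²). Then: (i) τ_y(0) = y; (ii) ‖τ_y(x)‖ < 1 whenever ‖x‖ < 1; and (iii) for all x, x' with ‖x‖ < 1 and ‖x'‖ < 1, d_𝔻(τ_y(x), τ_y(x')) = d_𝔻(x, x'), where d_𝔻(u, v) = arcosh(1 + 2‖u − v‖² / ((1 − ‖u‖²)(1 − ‖v‖²))) is the Poincaré ball distance. -/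
open RealInnerProductSpace

set_option maxHeartbeats 1600000

/-- The inverse hyperbolic cosine, `arcosh x = log(x + √(x² − 1))`. -/
noncomputable def arcosh (x : ℝ) : ℝ := Real.log (x + Real.sqrt (x ^ 2 - 1))

/-- The hyperbolic translation
`τ_y(x) = ((1 − ‖y‖²) x + (1 + 2⟨x, y⟩ + ‖x‖²) y) / (1 + 2⟨x, y⟩ + ‖y‖²‖x‖²)` of the
Poincaré ball satisfies: (i) `τ_y(0) = y`; (ii) it maps the open unit ball into
itself; (iii) it preserves the Poincaré distance
`d_𝔻(u, v) = arcosh(1 + 2‖u − v‖²/((1 − ‖u‖²)(1 − ‖v‖²)))`. -/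
theorem poincare_translation_isometry {n : ℕ} (hn : 1 ≤ n)
    (y : EuclideanSpace ℝ (Fin n)) (hy : ‖y‖ < 1) :
    let τ : EuclideanSpace ℝ (Fin n) → EuclideanSpace ℝ (Fin n) := fun x =>
      (1 / (1 + 2 * ⟪x, y⟫ + ‖y‖ ^ 2 * ‖x‖ ^ 2)) •
        ((1 - ‖y‖ ^ 2) • x + (1 + 2 * ⟪x, y⟫ + ‖x‖ ^ 2) • y)
    let dD : EuclideanSpace ℝ (Fin n) → EuclideanSpace ℝ (Fin n) → ℝ := fun u v =>
      arcosh (1 + 2 * ‖u - v‖ ^ 2 / ((1 - ‖u‖ ^ 2) * (1 - ‖v‖ ^ 2)))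
    τ 0 = y ∧
    (∀ x : EuclideanSpace ℝ (Fin n), ‖x‖ < 1 → ‖τ x‖ < 1) ∧
    (∀ x x' : EuclideanSpace ℝ (Fin n), ‖x‖ < 1 → ‖x'‖ < 1 →
      dD (τ x) (τ x') = dD x x') := by
  intro τ dD
  -- positivity of the denominator
  have hD : ∀ x : EuclideanSpace ℝ (Fin n), ‖x‖ < 1 →
      0 < 1 + 2 * ⟪x, y⟫ + ‖y‖ ^ 2 * ‖x‖ ^ 2 := by
    intro x hx
    have hCS := abs_real_inner_le_norm x y
    have h1 := (abs_le.mp hCS).1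
    have hxy : ‖x‖ * ‖y‖ < 1 := by
      nlinarith [norm_nonneg x, norm_nonneg y]
    have h3 : 0 < 1 - ‖x‖ * ‖y‖ := by linarith
    nlinarith [mul_pos h3 h3]
  -- key identity 1:  1 - ‖τ x‖² = (1-‖x‖²)(1-‖y‖²)/Dx
  have h1 : ∀ x : EuclideanSpace ℝ (Fin n), ‖x‖ < 1 →
      1 - ‖τ x‖ ^ 2 = (1 - ‖x‖ ^ 2) * (1 - ‖y‖ ^ 2) /
        (1 + 2 * ⟪x, y⟫ + ‖y‖ ^ 2 * ‖x‖ ^ 2) := by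
    intro x hx
    have hDx : (1 + 2 * ⟪x, y⟫ + ‖y‖ ^ 2 * ‖x‖ ^ 2) ≠ 0 := ne_of_gt (hD x hx)
    have e : ‖τ x‖ ^ 2 = (1 / (1 + 2 * ⟪x, y⟫ + ‖y‖ ^ 2 * ‖x‖ ^ 2)) ^ 2 *
        ((1 - ‖y‖ ^ 2) ^ 2 * ‖x‖ ^ 2 +
          2 * (1 - ‖y‖ ^ 2) * (1 + 2 * ⟪x, y⟫ + ‖x‖ ^ 2) * ⟪x, y⟫ +
          (1 + 2 * ⟪x, y⟫ + ‖x‖ ^ 2) ^ 2 * ‖y‖ ^ 2) := by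
      have hτx : τ x = (1 / (1 + 2 * ⟪x, y⟫ + ‖y‖ ^ 2 * ‖x‖ ^ 2)) •
          ((1 - ‖y‖ ^ 2) • x + (1 + 2 * ⟪x, y⟫ + ‖x‖ ^ 2) • y) := rfl
      rw [← real_inner_self_eq_norm_sq, hτx]
      simp only [real_inner_smul_left, real_inner_smul_right, inner_add_left,
        inner_add_right]
      simp only [real_inner_self_eq_norm_sq]
      try rw [real_inner_comm x y]
      ring
    rw [e]
    set a : ℝ := ⟪x, y⟫ with ha
    set r : ℝ := ‖x‖ with hr
    set s : ℝ := ‖y‖ with hs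
    clear_value a r s
    field_simp
    ring
  -- key identity 2: ‖τ x - τ x'‖² = (1-‖y‖²)² ‖x-x'‖² / (Dx Dx')
  have h2 : ∀ x x' : EuclideanSpace ℝ (Fin n), ‖x‖ < 1 → ‖x'‖ < 1 →
      ‖τ x - τ x'‖ ^ 2 = (1 - ‖y‖ ^ 2) ^ 2 * ‖x - x'‖ ^ 2 /
        ((1 + 2 * ⟪x, y⟫ + ‖y‖ ^ 2 * ‖x‖ ^ 2) *
         (1 + 2 * ⟪x', y⟫ + ‖y‖ ^ 2 * ‖x'‖ ^ 2)) := by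
    intro x x' hx hx'
    have hDx : (1 + 2 * ⟪x, y⟫ + ‖y‖ ^ 2 * ‖x‖ ^ 2) ≠ 0 := ne_of_gt (hD x hx)
    have hDx' : (1 + 2 * ⟪x', y⟫ + ‖y‖ ^ 2 * ‖x'‖ ^ 2) ≠ 0 := ne_of_gt (hD x' hx')
    have hxx : ‖x - x'‖ ^ 2 = ‖x‖ ^ 2 - 2 * ⟪x, x'⟫ + ‖x'‖ ^ 2 := by
      exact norm_sub_sq_real x x'
    have e : ‖τ x - τ x'‖ ^ 2 = ⟪τ x - τ x', τ x - τ x'⟫ :=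
      (real_inner_self_eq_norm_sq _).symm
    have hτx : τ x = (1 / (1 + 2 * ⟪x, y⟫ + ‖y‖ ^ 2 * ‖x‖ ^ 2)) •
        ((1 - ‖y‖ ^ 2) • x + (1 + 2 * ⟪x, y⟫ + ‖x‖ ^ 2) • y) := rfl
    have hτx' : τ x' = (1 / (1 + 2 * ⟪x', y⟫ + ‖y‖ ^ 2 * ‖x'‖ ^ 2)) •
        ((1 - ‖y‖ ^ 2) • x' + (1 + 2 * ⟪x', y⟫ + ‖x'‖ ^ 2) • y) := rfl
    rw [e, hxx, hτx, hτx']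
    simp only [inner_sub_left, inner_sub_right, real_inner_smul_left,
      real_inner_smul_right, inner_add_left, inner_add_right]
    simp only [real_inner_self_eq_norm_sq]
    try rw [real_inner_comm x y]
    try rw [real_inner_comm x' y]
    try rw [real_inner_comm x x']
    set a : ℝ := ⟪x, y⟫ with ha
    set b : ℝ := ⟪x', y⟫ with hb
    set c : ℝ := ⟪x, x'⟫ with hc
    set r : ℝ := ‖x‖ with hr
    set r' : ℝ := ‖x'‖ with hr'
    set s : ℝ := ‖y‖ with hs
    clear_value a b c r r' s
    field_simp
    ring
  refine ⟨?_, ?_, ?_⟩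
  · show (1 / (1 + 2 * ⟪(0 : EuclideanSpace ℝ (Fin n)), y⟫ +
        ‖y‖ ^ 2 * ‖(0 : EuclideanSpace ℝ (Fin n))‖ ^ 2)) •
        ((1 - ‖y‖ ^ 2) • (0 : EuclideanSpace ℝ (Fin n)) +
          (1 + 2 * ⟪(0 : EuclideanSpace ℝ (Fin n)), y⟫ +
            ‖(0 : EuclideanSpace ℝ (Fin n))‖ ^ 2) • y) = y
    rw [inner_zero_left, norm_zero, smul_zero]
    norm_num
  · intro x hx
    have hDx := hD x hx
    have hk := h1 x hx
    have hpos : 0 < (1 - ‖x‖ ^ 2) * (1 - ‖y‖ ^ 2) /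
        (1 + 2 * ⟪x, y⟫ + ‖y‖ ^ 2 * ‖x‖ ^ 2) := by
      apply div_pos ?_ hDx
      have hX : ‖x‖ ^ 2 < 1 := by nlinarith [norm_nonneg x]
      have hY : ‖y‖ ^ 2 < 1 := by nlinarith [norm_nonneg y]
      exact mul_pos (by linarith) (by linarith)
    nlinarith [norm_nonneg (τ x)]
  · intro x x' hx hx'
    have hDx := hD x hx
    have hDx' := hD x' hx'
    have hk1 := h1 x hx
    have hk2 := h1 x' hx'
    have hk3 := h2 x x' hx hx'
    show arcosh _ = arcosh _
    congr 1
    rw [hk1, hk2, hk3]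
    have hy2 : (1 : ℝ) - ‖y‖ ^ 2 ≠ 0 := by nlinarith [norm_nonneg y]
    have hx2 : (1 : ℝ) - ‖x‖ ^ 2 ≠ 0 := by nlinarith [norm_nonneg x]
    have hx'2 : (1 : ℝ) - ‖x'‖ ^ 2 ≠ 0 := by nlinarith [norm_nonneg x']
    have hDxne : (1 + 2 * ⟪x, y⟫ + ‖y‖ ^ 2 * ‖x‖ ^ 2) ≠ 0 := ne_of_gt hDx
    have hDx'ne : (1 + 2 * ⟪x', y⟫ + ‖y‖ ^ 2 * ‖x'‖ ^ 2) ≠ 0 := ne_of_gt hDx'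
    set a : ℝ := ⟪x, y⟫ with ha
    set b : ℝ := ⟪x', y⟫ with hb
    set r : ℝ := ‖x‖ with hr
    set r' : ℝ := ‖x'‖ with hr'
    set s : ℝ := ‖y‖ with hs
    set w : ℝ := ‖x - x'‖ with hw
    clear_value a b r r' s w
    field_simp
end

section
/- Let K > 0, θ₀ = arctan(2K), and let r_X, r_Y ∈ (0, π/2 − θ₀]. Let d_x, d_y > 0 satisfy coth d_x = sin(r_X + θ₀)/sin θ₀ and coth d_y = sin(r_Y + θ₀)/sin θ₀. Let D ∈ (0, π), and let d_xy > 0 satisfy the hyperbolic law of cosines cosh d_xy = cosh d_x cosh d_y − sinh d_x sinh d_y cos D. Define ψ ∈ [0, π/2] by sin ψ = √(sin r_X · sin(r_X + 2θ₀))/cos θ₀ and cos ψ = cos(r_X + θ₀)/cos θ₀, and define Ξ ∈ [0, π] by sin Ξ = sinh d_y sin D / sinh d_xy and cos Ξ = (cosh d_y − cosh d_x cosh d_xy)/(sinh d_x sinh d_xy). Then sin(Ξ − ψ) = 2 sin((D − r_X + r_Y)/2) · (cos((r_X + r_Y − D)/2 + θ₀)/(cos θ₀ sin θ₀)) · √(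 sin r_X · sin(r_X + 2θ₀) / (s_X² + s_Y² − 2 s_X s_Y cos D − sin² D) ), where s_X = sin(r_X + θ₀)/sin θ₀ and s_Y = sin(r_Y + θ₀)/sin θ₀. -/
/-!
Here `s_X = coth d_x` and `s_Y = coth d_y`. By the law of cosines, `(sin Ξ, cos Ξ)` is a positive
multiple of the vector `(sin D / sinh d_x, s_X cos D - s_Y)`, whose squared length
is the denominator `s_X² + s_Y² - 2 s_X s_Y cos D - sin² D`. Since
`sin r_X sin(r_X + 2θ₀) = sin²(r_X + θ₀) - sin² θ₀`, the aperture satisfies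
`sin ψ = sin θ₀ / (cos θ₀ sinh d_x)`, and expanding `sin (Ξ - ψ)` leaves
`sin (D - r_X - θ₀) + sin (r_Y + θ₀)`, which is the product in the claim.
-/

open Real

theorem Real.sin_sub_mul_sin_add (x y : ℝ) :
    sin (x - y) * sin (x + y) = sin x ^ 2 - sin y ^ 2 := by
  rw [sin_sub, sin_add]
  linear_combination sin x ^ 2 * sin_sq_add_cos_sq y - sin y ^ 2 * sin_sq_add_cos_sq x

theorem Real.coth_sq_sub_one {d : ℝ} (hd : d ≠ 0) :
    (cosh d / sinh d) ^ 2 - 1 = (sinh d)⁻¹ ^ 2 := by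
  have : sinh d ≠ 0 := sinh_ne_zero.2 hd
  field_simp
  linear_combination cosh_sq d

theorem sin_mul_sin_add_two_mul_eq_of_coth_eq {d r θ : ℝ} (hd : d ≠ 0) (hθ : sin θ ≠ 0)
    (hcoth : cosh d / sinh d = sin (r + θ) / sin θ) :
    sin r * sin (r + 2 * θ) = (sin θ / sinh d) ^ 2 := by
  have hsq := coth_sq_sub_one hd
  rw [hcoth] at hsq
  have := sin_sub_mul_sin_add (r + θ) θ
  rw [add_sub_cancel_right, add_assoc, ← two_mul] at this
  rw [this]
  field_simp at hsq ⊢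
  linear_combination hsq

theorem eq_div_sqrt_of_sq_add_sq_eq_one {x y t u v : ℝ} (h : x ^ 2 + y ^ 2 = 1)
    (hx : x = t * u) (hy : y = t * v) (ht : 0 < t) :
    x = u / √(u ^ 2 + v ^ 2) ∧ y = v / √(u ^ 2 + v ^ 2) := by
  have hnorm : √(u ^ 2 + v ^ 2) = t⁻¹ := by
    rw [← sqrt_sq (inv_pos.2 ht).le]
    congr 1
    subst hx hy
    field_simp
    linear_combination h
  rw [hnorm, div_inv_eq_mul, div_inv_eq_mul]
  exact ⟨hx.trans (mul_comm _ _), hy.trans (mul_comm _ _)⟩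

theorem hyperbolic_exterior_angle_eq {dx dy dxy D Ξ : ℝ}
    (hdx : 0 < dx) (hdy : 0 < dy) (hdxy : 0 < dxy)
    (hlaw : cosh dxy = cosh dx * cosh dy - sinh dx * sinh dy * cos D)
    (hsin : sin Ξ = sinh dy * sin D / sinh dxy)
    (hcos : cos Ξ = (cosh dy - cosh dx * cosh dxy) / (sinh dx * sinh dxy)) :
    sin Ξ = sin D / sinh dx /
        √((sin D / sinh dx) ^ 2 + (cosh dx / sinh dx * cos D - cosh dy / sinh dy) ^ 2) ∧
      cos Ξ = (cosh dx / sinh dx * cos D - cosh dy / sinh dy) /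
        √((sin D / sinh dx) ^ 2 + (cosh dx / sinh dx * cos D - cosh dy / sinh dy) ^ 2) := by
  have hsx : 0 < sinh dx := sinh_pos_iff.2 hdx
  have hsy : 0 < sinh dy := sinh_pos_iff.2 hdy
  have hsxy : 0 < sinh dxy := sinh_pos_iff.2 hdxy
  refine eq_div_sqrt_of_sq_add_sq_eq_one (sin_sq_add_cos_sq Ξ) ?_ ?_
    (by positivity : 0 < sinh dx * sinh dy / sinh dxy)
  · rw [hsin]
    field_simp
  · rw [hcos, hlaw]
    field_simp
    linear_combination (-cosh dy) * cosh_sq dx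

theorem hyperbolic_cone_energy_disk_form_general (K : ℝ) (hK : 0 < K) (θ₀ : ℝ)
    (hθ₀ : θ₀ = Real.arctan (2 * K)) (rX rY : ℝ)
    (dx dy : ℝ) (hdx : 0 < dx) (hdy : 0 < dy)
    (hcothx : Real.cosh dx / Real.sinh dx = Real.sin (rX + θ₀) / Real.sin θ₀)
    (hcothy : Real.cosh dy / Real.sinh dy = Real.sin (rY + θ₀) / Real.sin θ₀)
    (D : ℝ) (dxy : ℝ) (hdxy : 0 < dxy)
    (hlaw : Real.cosh dxy =
      Real.cosh dx * Real.cosh dy - Real.sinh dx * Real.sinh dy * Real.cos D)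
    (ψ : ℝ)
    (hψsin : Real.sin ψ =
      Real.sqrt (Real.sin rX * Real.sin (rX + 2 * θ₀)) / Real.cos θ₀)
    (hψcos : Real.cos ψ = Real.cos (rX + θ₀) / Real.cos θ₀)
    (Ξ : ℝ)
    (hΞsin : Real.sin Ξ = Real.sinh dy * Real.sin D / Real.sinh dxy)
    (hΞcos : Real.cos Ξ =
      (Real.cosh dy - Real.cosh dx * Real.cosh dxy) / (Real.sinh dx * Real.sinh dxy)) :
    Real.sin (Ξ - ψ) =
      2 * Real.sin ((D - rX + rY) / 2) *
        (Real.cos ((rX + rY - D) / 2 + θ₀) / (Real.cos θ₀ * Real.sin θ₀)) *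
        Real.sqrt (Real.sin rX * Real.sin (rX + 2 * θ₀) /
          ((Real.sin (rX + θ₀) / Real.sin θ₀) ^ 2 +
            (Real.sin (rY + θ₀) / Real.sin θ₀) ^ 2 -
            2 * (Real.sin (rX + θ₀) / Real.sin θ₀) *
              (Real.sin (rY + θ₀) / Real.sin θ₀) * Real.cos D -
            Real.sin D ^ 2)) := by
  have hθ₀pos : 0 < θ₀ := hθ₀ ▸ arctan_pos.2 (by positivity)
  have hθ₀lt : θ₀ < π / 2 := hθ₀ ▸ arctan_lt_pi_div_two _
  have hs : 0 < sin θ₀ := sin_pos_of_pos_of_lt_pi hθ₀pos (by linarith [pi_pos])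
  have hc : 0 < cos θ₀ := hθ₀ ▸ cos_arctan_pos _
  have hsx : 0 < sinh dx := sinh_pos_iff.2 hdx
  have hprod := sin_mul_sin_add_two_mul_eq_of_coth_eq hdx.ne' hs.ne' hcothx
  obtain ⟨hsinΞ, hcosΞ⟩ := hyperbolic_exterior_angle_eq hdx hdy hdxy hlaw hΞsin hΞcos
  simp only [hcothx, hcothy] at hsinΞ hcosΞ
  have hnorm : (sin D / sinh dx) ^ 2 +
      (sin (rX + θ₀) / sin θ₀ * cos D - sin (rY + θ₀) / sin θ₀) ^ 2 =
      (sin (rX + θ₀) / sin θ₀) ^ 2 + (sin (rY + θ₀) / sin θ₀) ^ 2 -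
        2 * (sin (rX + θ₀) / sin θ₀) * (sin (rY + θ₀) / sin θ₀) * cos D - sin D ^ 2 := by
    have hcoth := coth_sq_sub_one hdx.ne'
    rw [hcothx] at hcoth
    linear_combination (-sin D ^ 2) * hcoth + (sin (rX + θ₀) / sin θ₀) ^ 2 * sin_sq_add_cos_sq D
  have hsum : sin D * cos (rX + θ₀) - cos D * sin (rX + θ₀) + sin (rY + θ₀) =
      2 * sin ((D - rX + rY) / 2) * cos ((rX + rY - D) / 2 + θ₀) := by
    rw [← sin_sub, sin_add_sin, ← cos_neg]
    ring_nf
  rw [hnorm] at hsinΞ hcosΞ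
  rw [sin_sub, hsinΞ, hcosΞ, hψsin, hψcos, hprod, sqrt_div (sq_nonneg _),
    sqrt_sq (by positivity), ← mul_div_assoc (2 * sin ((D - rX + rY) / 2)), ← hsum]
  field_simp
  ring

/-- The Hyperbolic Entailment Cone energy in Disk Embedding form: with
`K > 0`, `θ₀ = arctan(2K)`, disk radii `r_X, r_Y ∈ (0, π/2 − θ₀]`, distances
`d_x, d_y > 0` from the origin satisfying `coth d_x = sin(r_X + θ₀)/sin θ₀` and
`coth d_y = sin(r_Y + θ₀)/sin θ₀`, angle `D ∈ (0, π)` at the origin, and opposite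
side `d_xy > 0` given by the hyperbolic law of cosines, the aperture angle `ψ` and
the angle `Ξ` satisfy
`sin(Ξ − ψ) = 2 sin((D − r_X + r_Y)/2) · (cos((r_X + r_Y − D)/2 + θ₀)/(cos θ₀ sin θ₀))
  · √(sin r_X sin(r_X + 2θ₀) / (s_X² + s_Y² − 2 s_X s_Y cos D − sin² D))`,
where `s_X = sin(r_X + θ₀)/sin θ₀` and `s_Y = sin(r_Y + θ₀)/sin θ₀`. -/
theorem hyperbolic_cone_energy_disk_form (K : ℝ) (hK : 0 < K) (θ₀ : ℝ)
    (hθ₀ : θ₀ = Real.arctan (2 * K)) (rX rY : ℝ)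
    (hrX : rX ∈ Set.Ioc 0 (Real.pi / 2 - θ₀))
    (hrY : rY ∈ Set.Ioc 0 (Real.pi / 2 - θ₀))
    (dx dy : ℝ) (hdx : 0 < dx) (hdy : 0 < dy)
    (hcothx : Real.cosh dx / Real.sinh dx = Real.sin (rX + θ₀) / Real.sin θ₀)
    (hcothy : Real.cosh dy / Real.sinh dy = Real.sin (rY + θ₀) / Real.sin θ₀)
    (D : ℝ) (hD : D ∈ Set.Ioo 0 Real.pi) (dxy : ℝ) (hdxy : 0 < dxy)
    (hlaw : Real.cosh dxy =
      Real.cosh dx * Real.cosh dy - Real.sinh dx * Real.sinh dy * Real.cos D)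
    (ψ : ℝ) (hψmem : ψ ∈ Set.Icc 0 (Real.pi / 2))
    (hψsin : Real.sin ψ =
      Real.sqrt (Real.sin rX * Real.sin (rX + 2 * θ₀)) / Real.cos θ₀)
    (hψcos : Real.cos ψ = Real.cos (rX + θ₀) / Real.cos θ₀)
    (Ξ : ℝ) (hΞmem : Ξ ∈ Set.Icc 0 Real.pi)
    (hΞsin : Real.sin Ξ = Real.sinh dy * Real.sin D / Real.sinh dxy)
    (hΞcos : Real.cos Ξ =
      (Real.cosh dy - Real.cosh dx * Real.cosh dxy) / (Real.sinh dx * Real.sinh dxy)) :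
    Real.sin (Ξ - ψ) =
      2 * Real.sin ((D - rX + rY) / 2) *
        (Real.cos ((rX + rY - D) / 2 + θ₀) / (Real.cos θ₀ * Real.sin θ₀)) *
        Real.sqrt (Real.sin rX * Real.sin (rX + 2 * θ₀) /
          ((Real.sin (rX + θ₀) / Real.sin θ₀) ^ 2 +
            (Real.sin (rY + θ₀) / Real.sin θ₀) ^ 2 -
            2 * (Real.sin (rX + θ₀) / Real.sin θ₀) *
              (Real.sin (rY + θ₀) / Real.sin θ₀) * Real.cos D -
            Real.sin D ^ 2)) :=
  hyperbolic_cone_energy_disk_form_general K hK θ₀ hθ₀ rX rY dx dy hdx hdy hcothx hcothy D dxy hdxy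
    hlaw ψ hψsin hψcos Ξ hΞsin hΞcos
end
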